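/- Suppose every convex combination of weak-star slices of B_{X*} has diameter 2. Then for any finite δ-net y₁,…,y_n of S_Y (Y a finite-dimensional subspace of X) and any 0 < ρ < δ, there exists x ∈ S_X and functionals f_i, g_i ∈ S(B_{X*}, y_i, ρ) with f_i(x) > 1 − ρ and g_i(x) < −(1 − ρ) for all i, and consequently ‖t y_i + αx‖ ≥ (1 − ρ)(t‖y_i‖ + |α|) for all t ≥ 0, α ∈ ℝ and all i. -/

import Mathlib

open scoped BigOperators
open Metric

noncomputable section

/-- The weak-star slice of the dual unit ball determined by `y` and `ρ`. -/
def wSlice {X : Type*} [NormedAddCommGroup X] [NormedSpace ℝ X] (y : X) (ρ : ℝ) :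
    Set (StrongDual ℝ X) :=
  {f | ‖f‖ ≤ 1 ∧ 1 - ρ < f y}

/-- The convex combination `∑ lam i • S i` of sets. -/
def ccomb {E : Type*} [AddCommMonoid E] [Module ℝ E] {n : ℕ}
    (lam : Fin n → ℝ) (S : Fin n → Set E) : Set E :=
  {y | ∃ f : Fin n → E, (∀ i, f i ∈ S i) ∧ y = ∑ i, lam i • f i}

/-!
With equal weights `1/n`, diameter `2` of `∑ S(B_{X*}, y_i, ρ) / n` yields two points
`∑ f_i / n` and `∑ g_i / n` of that set whose difference is normed, up to `ρ/n`, by some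
`x ∈ S_X`. Each of the `n` summands `f_i(x) - g_i(x)` is at most `2`, so none can lose more
than `ρ`: `f_i(x) - g_i(x) > 2 - ρ`, whence `f_i(x) > 1 - ρ` and `g_i(x) < -(1 - ρ)`.
Testing `t y_i + α x` against `f_i` when `α ≥ 0` and against `g_i` when `α < 0` gives the
octahedral estimate.
-/

open Finset

theorem Finset.sum_le_add_card_sub_one_mul {ι R : Type*} [Ring R] [PartialOrder R]
    [IsOrderedRing R] {s : Finset ι} {f : ι → R} {M : R} {i : ι} (hi : i ∈ s)
    (hf : ∀ j ∈ s, f j ≤ M) : ∑ j ∈ s, f j ≤ f i + (#s - 1 : R) * M := by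
  classical
  rw [← add_sum_erase s f hi]
  have hrest := sum_le_card_nsmul (s.erase i) f M fun j hj => hf j (mem_of_mem_erase hj)
  rw [card_erase_of_mem hi, nsmul_eq_mul, Nat.cast_pred (card_pos.2 ⟨i, hi⟩)] at hrest
  exact add_le_add_right hrest _

theorem Metric.exists_lt_dist_of_lt_diam {α : Type*} [PseudoMetricSpace α] {S : Set α} {r : ℝ}
    (hr : 0 ≤ r) (h : r < diam S) : ∃ u ∈ S, ∃ v ∈ S, r < dist u v := by
  by_contra! hle
  exact h.not_ge (diam_le_of_forall_dist_le hr hle)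

section Dual

variable {X : Type*} [NormedAddCommGroup X] [NormedSpace ℝ X]

theorem StrongDual.exists_norm_eq_one_lt_apply {φ : StrongDual ℝ X} {r : ℝ} (hr : 0 ≤ r)
    (h : r < ‖φ‖) : ∃ x : X, ‖x‖ = 1 ∧ r < φ x := by
  obtain ⟨w, hw1, hrw⟩ := φ.exists_lt_apply_of_lt_opNorm h
  obtain ⟨w, hw1, hrw⟩ : ∃ w : X, ‖w‖ < 1 ∧ r < φ w := by
    rcases le_total 0 (φ w) with hpos | hneg
    · exact ⟨w, hw1, by rwa [Real.norm_of_nonneg hpos] at hrw⟩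
    · exact ⟨-w, by rwa [norm_neg], by rwa [map_neg, ← Real.norm_of_nonpos hneg]⟩
  have hw0 : w ≠ 0 := by
    rintro rfl
    simp only [map_zero] at hrw
    linarith
  have hw_inv : 1 ≤ ‖w‖⁻¹ := (one_le_inv₀ (norm_pos_iff.2 hw0)).2 hw1.le
  refine ⟨‖w‖⁻¹ • w, norm_smul_inv_norm hw0, ?_⟩
  rw [map_smul, smul_eq_mul]
  exact hrw.trans_le (le_mul_of_one_le_left (hr.trans hrw.le) hw_inv)

theorem StrongDual.abs_apply_le_norm_of_norm_le_one {f : StrongDual ℝ X} (hf : ‖f‖ ≤ 1)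
    (x : X) : |f x| ≤ ‖x‖ := by
  simpa using f.le_of_opNorm_le hf x

theorem exists_forall_apply_gt_and_apply_lt_of_diam_ccomb_eq_two {n : ℕ} (hn : 0 < n)
    {S : Fin n → Set (StrongDual ℝ X)} (hS : ∀ i, ∀ f ∈ S i, ‖f‖ ≤ 1)
    (hdiam : diam (ccomb (fun _ => (n : ℝ)⁻¹) S) = 2) {ε : ℝ} (hε0 : 0 < ε)
    (hε2 : ε ≤ 2) :
    ∃ x : X, ‖x‖ = 1 ∧ ∃ F G : Fin n → StrongDual ℝ X,
      (∀ i, F i ∈ S i) ∧ (∀ i, G i ∈ S i) ∧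
      ∀ i, 1 - ε < F i x ∧ G i x < -(1 - ε) := by
  have hn' : (0 : ℝ) < n := by exact_mod_cast hn
  have hεn : ε / n ≤ ε := div_le_self hε0.le (by exact_mod_cast hn)
  have hr : 0 ≤ 2 - ε / n := by linarith
  obtain ⟨_, ⟨F, hF, rfl⟩, _, ⟨G, hG, rfl⟩, huv⟩ :=
    exists_lt_dist_of_lt_diam hr (by rw [hdiam]; linarith [div_pos hε0 hn'])
  rw [dist_eq_norm] at huv
  obtain ⟨x, hx, hux⟩ := StrongDual.exists_norm_eq_one_lt_apply hr huv
  have hunit : ∀ i, ∀ f ∈ S i, -1 ≤ f x ∧ f x ≤ 1 := fun i f hf =>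
    abs_le.1 (hx ▸ StrongDual.abs_apply_le_norm_of_norm_le_one (hS i f hf) x)
  have hsum : 2 * n - ε < ∑ j, (F j x - G j x) := by
    have hval : (∑ j, (n : ℝ)⁻¹ • F j - ∑ j, (n : ℝ)⁻¹ • G j) x
        = (n : ℝ)⁻¹ * ∑ j, (F j x - G j x) := by
      simp [mul_sum, mul_sub]
    rw [hval, lt_inv_mul_iff₀ hn', mul_sub, mul_div_cancel₀ _ hn'.ne'] at hux
    linarith
  refine ⟨x, hx, F, G, hF, hG, fun i => ?_⟩
  have hbound := sum_le_add_card_sub_one_mul (f := fun j => F j x - G j x) (M := 2)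
    (mem_univ i) fun j _ => by linarith [(hunit j _ (hF j)).2, (hunit j _ (hG j)).1]
  rw [card_univ, Fintype.card_fin] at hbound
  have hFi := hunit i _ (hF i)
  have hGi := hunit i _ (hG i)
  constructor <;> linarith

theorem mul_add_le_norm_smul_add_smul {f : StrongDual ℝ X} (hf : ‖f‖ ≤ 1) {c t a : ℝ}
    {x y : X} (hy : c ≤ f y) (hx : c ≤ f x) (ht : 0 ≤ t) (ha : 0 ≤ a) :
    c * (t + a) ≤ ‖t • y + a • x‖ :=
  calc c * (t + a) = t * c + a * c := by ring
    _ ≤ t * f y + a * f x :=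
      add_le_add (mul_le_mul_of_nonneg_left hy ht) (mul_le_mul_of_nonneg_left hx ha)
    _ = f (t • y + a • x) := by simp
    _ ≤ ‖t • y + a • x‖ :=
      (le_abs_self _).trans (StrongDual.abs_apply_le_norm_of_norm_le_one hf _)

theorem mul_add_abs_le_norm_smul_add_smul {f g : StrongDual ℝ X} (hf : ‖f‖ ≤ 1)
    (hg : ‖g‖ ≤ 1) {c t a : ℝ} {x y : X} (hfy : c ≤ f y) (hgy : c ≤ g y)
    (hfx : c ≤ f x) (hgx : g x ≤ -c) (ht : 0 ≤ t) :
    c * (t + |a|) ≤ ‖t • y + a • x‖ := by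
  rcases le_total 0 a with ha | ha
  · rw [abs_of_nonneg ha]
    exact mul_add_le_norm_smul_add_smul hf hfy hfx ht ha
  · rw [abs_of_nonpos ha, ← neg_smul_neg a x]
    exact mul_add_le_norm_smul_add_smul hg hgy (by rw [map_neg]; linarith) ht (neg_nonneg.2 ha)

end Dual

theorem ccomb_wSlices_diam_two_gives_octahedral_direction_general
    (X : Type*) [NormedAddCommGroup X] [NormedSpace ℝ X]
    (h : ∀ (n : ℕ) (lam : Fin n → ℝ), (∀ i, 0 < lam i) → ∑ i, lam i = 1 →
      ∀ (x : Fin n → X), (∀ i, ‖x i‖ = 1) →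
      ∀ (α : Fin n → ℝ), (∀ i, α i ∈ Set.Ioo (0 : ℝ) 1) →
      Metric.diam (ccomb lam (fun i => wSlice (x i) (α i))) = 2)
    (δ : ℝ) (hδ : δ ∈ Set.Ioo (0:ℝ) 1)
    (n : ℕ) (hn : 0 < n) (y : Fin n → X)
    (hy : ∀ i, ‖y i‖ = 1)
    (ρ : ℝ) (hρ : ρ ∈ Set.Ioo (0:ℝ) δ) :
    ∃ x : X, ‖x‖ = 1 ∧
      ∃ f g : Fin n → StrongDual ℝ X,
        (∀ i, f i ∈ wSlice (y i) ρ) ∧ (∀ i, g i ∈ wSlice (y i) ρ) ∧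
        (∀ i, 1 - ρ < f i x) ∧ (∀ i, g i x < -(1 - ρ)) ∧
        (∀ i, ∀ t : ℝ, 0 ≤ t → ∀ a : ℝ,
          (1 - ρ) * (t * ‖y i‖ + |a|) ≤ ‖t • y i + a • x‖) := by
  have hρ1 : ρ < 1 := hρ.2.trans hδ.2
  have hweights : ∑ _i : Fin n, (n : ℝ)⁻¹ = 1 := by
    simp [Nat.cast_ne_zero.2 hn.ne']
  have hdiam := h n _ (fun _ => by positivity) hweights y hy _ fun _ => ⟨hρ.1, hρ1⟩
  obtain ⟨x, hx, F, G, hF, hG, hFG⟩ :=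
    exists_forall_apply_gt_and_apply_lt_of_diam_ccomb_eq_two hn (fun _ _ hf => hf.1) hdiam
      hρ.1 (by linarith)
  refine ⟨x, hx, F, G, hF, hG, fun i => (hFG i).1, fun i => (hFG i).2, fun i t ht a => ?_⟩
  rw [hy i, mul_one]
  exact mul_add_abs_le_norm_smul_add_smul (hF i).1 (hG i).1 (hF i).2.le (hG i).2.le
    (hFG i).1.le (hFG i).2.le ht

theorem ccomb_wSlices_diam_two_gives_octahedral_direction
    (X : Type*) [NormedAddCommGroup X] [NormedSpace ℝ X] [CompleteSpace X]
    (h : ∀ (n : ℕ) (lam : Fin n → ℝ), (∀ i, 0 < lam i) → ∑ i, lam i = 1 →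
      ∀ (x : Fin n → X), (∀ i, ‖x i‖ = 1) →
      ∀ (α : Fin n → ℝ), (∀ i, α i ∈ Set.Ioo (0 : ℝ) 1) →
      Metric.diam (ccomb lam (fun i => wSlice (x i) (α i))) = 2)
    (Y : Subspace ℝ X) (hY : FiniteDimensional ℝ Y)
    (δ : ℝ) (hδ : δ ∈ Set.Ioo (0:ℝ) 1)
    (n : ℕ) (hn : 0 < n) (y : Fin n → X)
    (hyY : ∀ i, y i ∈ Y) (hy : ∀ i, ‖y i‖ = 1)
    (hnet : ∀ z ∈ Y, ‖z‖ = 1 → ∃ i, ‖z - y i‖ ≤ δ)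
    (ρ : ℝ) (hρ : ρ ∈ Set.Ioo (0:ℝ) δ) :
    ∃ x : X, ‖x‖ = 1 ∧
      ∃ f g : Fin n → StrongDual ℝ X,
        (∀ i, f i ∈ wSlice (y i) ρ) ∧ (∀ i, g i ∈ wSlice (y i) ρ) ∧
        (∀ i, 1 - ρ < f i x) ∧ (∀ i, g i x < -(1 - ρ)) ∧
        (∀ i, ∀ t : ℝ, 0 ≤ t → ∀ a : ℝ,
          (1 - ρ) * (t * ‖y i‖ + |a|) ≤ ‖t • y i + a • x‖) :=
  ccomb_wSlices_diam_two_gives_octahedral_direction_general X h δ hδ n hn y hy ρ hρ
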